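/- With the setup of the previous statement, the dual objective value of the corrected solution satisfies t^⊤π̂ + ∑_{n=1}^N (û_n + min(0, z_SEP^n)) ≤ z*_DM, where z*_DM is the supremum of t^⊤π + ∑_n u_n over all (π, {u_n}) feasible for the full dual. Hence ẑ_RDM + ∑_n min(0, z_SEP^n) ≤ z*_DM. -/
import Mathlib


open scoped BigOperators RealInnerProductSpace

theorem stmt_8 {ι : Type*} [DecidableEq ι] (m N : ℕ) (hN : 1 ≤ N)
    (I : Fin N → Finset ι) (I' : Fin N → Finset ι)
    (hne : ∀ n, (I n).Nonempty) (hsub : ∀ n, I' n ⊆ I n)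
    (A : Fin N → ι → EuclideanSpace ℝ (Fin m)) (c : Fin N → ι → ℝ)
    (t πh : EuclideanSpace ℝ (Fin m)) (uh : Fin N → ℝ)
    (hfeas : ∀ n, ∀ i ∈ I' n, ⟪A n i, πh⟫ + uh n ≤ c n i)
    (zSEP : Fin N → ℝ)
    (hz : ∀ n, zSEP n = ((I n).image (fun i => c n i - ⟪A n i, πh⟫ - uh n)).min'
      (Finset.Nonempty.image (hne n) _))
    (zDM : ℝ)
    (hzDM : IsLUB {v : ℝ | ∃ (π : EuclideanSpace ℝ (Fin m)) (u : Fin N → ℝ),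
      (∀ n, ∀ i ∈ I n, ⟪A n i, π⟫ + u n ≤ c n i) ∧
      v = ⟪t, π⟫ + ∑ n : Fin N, u n} zDM)
    (zhRDM : ℝ) (hzh : zhRDM = ⟪t, πh⟫ + ∑ n : Fin N, uh n) :
    zhRDM + ∑ n : Fin N, min 0 (zSEP n) ≤ zDM := by
  apply hzDM.1
  refine ⟨πh, fun n => uh n + min 0 (zSEP n), ?_, ?_⟩
  · intro n i hi
    have hmem : c n i - ⟪A n i, πh⟫ - uh n ∈
        (I n).image (fun i => c n i - ⟪A n i, πh⟫ - uh n) :=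
      Finset.mem_image_of_mem _ hi
    have := Finset.min'_le _ _ hmem
    rw [← hz n] at this
    have h2 : min 0 (zSEP n) ≤ zSEP n := min_le_right _ _
    dsimp only
    linarith
  · rw [hzh, Finset.sum_add_distrib]
    ring
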